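/- arXiv:2109.11144 — 2 statements merged into one kernel-verified Lean document; each statement's English description precedes it below -/
import Mathlib

section
/- For any channel N: CPTP(A→B), the maximum output purity ν_∞(N) = sup_{ρ ∈ D(A)} ||N(ρ)||_∞ equals Λ²(J_N), the maximal overlap of the Choi matrix with product unit vectors. -/
open scoped BigOperators Kronecker ComplexOrder
open Matrix

noncomputable section

/-- A density operator: positive semidefinite with unit trace. -/
def IsDensity {ι : Type*} [Fintype ι] (ρ : Matrix ι ι ℂ) : Prop :=
  ρ.PosSemidef ∧ ρ.trace = 1

/-- A separable bipartite positive operator: a nonnegative combination of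
tensor products of positive operators. -/
def IsSep {ιA ιB : Type*} [Fintype ιA] [Fintype ιB]
    (Ω : Matrix (ιA × ιB) (ιA × ιB) ℂ) : Prop :=
  ∃ (n : ℕ) (a : Fin n → Matrix ιA ιA ℂ) (b : Fin n → Matrix ιB ιB ℂ),
    (∀ i, (a i).PosSemidef) ∧ (∀ i, (b i).PosSemidef) ∧
      Ω = ∑ i, a i ⊗ₖ b i

/-- Partial trace over the first (A) system. -/
def ptraceA {ιA ιB : Type*} [Fintype ιA]
    (Ω : Matrix (ιA × ιB) (ιA × ιB) ℂ) : Matrix ιB ιB ℂ :=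
  Matrix.of fun k l => ∑ i, Ω (i, k) (i, l)

/-- The Choi matrix of a linear map on matrices. -/
def choi {ιA ιB : Type*} [Fintype ιA] [DecidableEq ιA]
    (Φ : Matrix ιA ιA ℂ →ₗ[ℂ] Matrix ιB ιB ℂ) :
    Matrix (ιA × ιB) (ιA × ιB) ℂ :=
  Matrix.of fun p q => Φ (Matrix.single p.1 q.1 1) p.2 q.2

/-- A quantum channel: a completely positive (Choi matrix PSD) trace-preserving
linear map. -/
structure Channel (ιA ιB : Type*) [Fintype ιA] [DecidableEq ιA] [Fintype ιB] where
  map : Matrix ιA ιA ℂ →ₗ[ℂ] Matrix ιB ιB ℂ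
  cp : (choi map).PosSemidef
  tp : ∀ X, (map X).trace = X.trace

/-- The communication value, via the conic program over the separable cone:
`cv(N) = max { Tr[Ω J_N] : Ω separable, Tr_A Ω = I }`. -/
def cv {ιA ιB : Type*} [Fintype ιA] [DecidableEq ιA] [Fintype ιB] [DecidableEq ιB]
    (N : Channel ιA ιB) : ℝ :=
  sSup {r | ∃ Ω : Matrix (ιA × ιB) (ιA × ιB) ℂ,
    IsSep Ω ∧ ptraceA Ω = 1 ∧ r = ((Ω * choi N.map).trace).re}

/-- The operational communication value: supremum over finite families of input
states and POVMs of `∑_x Tr[Π_x N(ρ_x)]`. -/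
def cvOp {ιA ιB : Type*} [Fintype ιA] [DecidableEq ιA] [Fintype ιB] [DecidableEq ιB]
    (N : Channel ιA ιB) : ℝ :=
  sSup {r | ∃ (n : ℕ) (ρ : Fin n → Matrix ιA ιA ℂ) (E : Fin n → Matrix ιB ιB ℂ),
    (∀ x, IsDensity (ρ x)) ∧ (∀ x, (E x).PosSemidef) ∧ (∑ x, E x) = 1 ∧
      r = (∑ x, (E x * N.map (ρ x)).trace).re}

/-- Maximal overlap of a bipartite operator with product unit vectors
(`Λ²`, exponential of minus the geometric measure of entanglement). -/
def lam2 {ιA ιB : Type*} [Fintype ιA] [Fintype ιB]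
    (ω : Matrix (ιA × ιB) (ιA × ιB) ℂ) : ℝ :=
  sSup {r | ∃ (a : ιA → ℂ) (b : ιB → ℂ),
    (∑ i, ‖a i‖ ^ 2) = 1 ∧ (∑ k, ‖b k‖ ^ 2) = 1 ∧
      r = (star (fun p : ιA × ιB => a p.1 * b p.2) ⬝ᵥ
        ω *ᵥ fun p : ιA × ιB => a p.1 * b p.2).re}

end

open scoped Matrix.Norms.L2Operator

/-- The maximum output purity of a channel:
`ν_∞(N) = sup_{ρ density} ‖N(ρ)‖_∞` (L2 operator norm). -/
noncomputable def nuInf {ιA ιB : Type*} [Fintype ιA] [DecidableEq ιA]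
    [Fintype ιB] [DecidableEq ιB] (N : Channel ιA ιB) : ℝ :=
  sSup {r | ∃ ρ : Matrix ιA ιA ℂ, IsDensity ρ ∧ r = ‖N.map ρ‖}

/-!
Decompose a density operator spectrally as `ρ = ∑ₖ λₖ |uₖ⟩⟨uₖ|`. By the Choi identity
`⟨β|N(|α⟩⟨α|)|β⟩ = ⟨ᾱ⊗β|J_N|ᾱ⊗β⟩`, every expectation `⟨β|N(ρ)|β⟩` at a unit vector `β` is a
convex combination of overlaps of `J_N` with product unit vectors, hence lies in `[0, Λ²(J_N)]`.
Since `N(ρ)` is then positive semidefinite, its operator norm is the largest such expectation, so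
`ν_∞(N) ≤ Λ²(J_N)`. Conversely, each overlap `⟨ᾱ⊗β|J_N|ᾱ⊗β⟩` is an expectation of the output
`N(|ᾱ⟩⟨ᾱ|)` of a pure state, so it is at most `ν_∞(N)`.
-/

namespace Matrix

variable {n : Type*} [Fintype n] [DecidableEq n]

theorem posSemidef_of_forall_dotProduct_mulVec_nonneg {M : Matrix n n ℂ}
    (hM : ∀ x, 0 ≤ star x ⬝ᵥ M *ᵥ x) : M.PosSemidef := by
  rw [← isPositive_toEuclideanLin_iff, LinearMap.isPositive_iff_complex]
  intro x
  obtain ⟨hre, him⟩ := Complex.nonneg_iff.mp (hM x)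
  simp only [EuclideanSpace.inner_eq_star_dotProduct, ofLp_toLpLin, toLin'_apply, dotProduct_star,
    dotProduct_comm _ (star x.ofLp)]
  simp [Complex.ext_iff, ← him, hre]

theorem IsHermitian.eq_sum_eigenvalues_smul_vecMulVec {A : Matrix n n ℂ} (hA : A.IsHermitian) :
    A = ∑ k, (hA.eigenvalues k : ℂ) •
      vecMulVec (hA.eigenvectorBasis k) (star ⇑(hA.eigenvectorBasis k)) := by
  conv_lhs => rw [hA.spectral_theorem]
  ext i j
  simp only [Unitary.conjStarAlgAut_apply, mul_apply, diagonal_apply, eigenvectorUnitary_apply,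
    sum_apply, vecMulVec_apply, smul_apply, Function.comp_apply, RCLike.ofReal_eq_complex_ofReal,
    mul_ite, mul_zero, Finset.sum_ite_eq', Finset.mem_univ, if_true, star_apply, Pi.star_apply,
    smul_eq_mul]
  exact Finset.sum_congr rfl fun k _ => by ring

theorem reApplyInnerSelf_toEuclideanCLM (M : Matrix n n ℂ) (x : EuclideanSpace ℂ n) :
    (toEuclideanCLM (𝕜 := ℂ) M).reApplyInnerSelf x = (star x.ofLp ⬝ᵥ M *ᵥ x.ofLp).re := by
  rw [ContinuousLinearMap.reApplyInnerSelf_apply, EuclideanSpace.inner_eq_star_dotProduct,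
    dotProduct_comm, star_dotProduct]
  simp

theorem re_dotProduct_mulVec_le_l2_opNorm (M : Matrix n n ℂ) {b : n → ℂ}
    (hb : ∑ k, ‖b k‖ ^ 2 = 1) : (star b ⬝ᵥ M *ᵥ b).re ≤ ‖M‖ := by
  have hb' : ‖WithLp.toLp 2 b‖ ^ 2 = 1 := by rw [EuclideanSpace.norm_sq_eq]; exact hb
  have h := (toEuclideanCLM (𝕜 := ℂ) M).rayleighQuotient_le_norm (WithLp.toLp 2 b)
  rw [ContinuousLinearMap.rayleighQuotient, hb', div_one, reApplyInnerSelf_toEuclideanCLM] at h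
  exact (le_abs_self _).trans h

theorem l2_opNorm_le_of_re_dotProduct_mulVec_le {M : Matrix n n ℂ} (hM : M.PosSemidef) {r : ℝ}
    (hr : 0 ≤ r) (h : ∀ b : n → ℂ, ∑ k, ‖b k‖ ^ 2 = 1 → (star b ⬝ᵥ M *ᵥ b).re ≤ r) :
    ‖M‖ ≤ r := by
  have hsymm : (toEuclideanCLM (𝕜 := ℂ) M : EuclideanSpace ℂ n →ₗ[ℂ] _).IsSymmetric := by
    rw [coe_toEuclideanCLM_eq_toEuclideanLin, isSymmetric_toEuclideanLin_iff]
    exact hM.isHermitian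
  rw [← l2_opNorm_toEuclideanCLM, ContinuousLinearMap.norm_eq_iSup_rayleighQuotient _ hsymm]
  refine ciSup_le fun x => ?_
  rcases eq_or_ne x 0 with rfl | hx
  · simpa using hr
  have hu : ‖(‖x‖⁻¹ : ℂ) • x‖ = 1 := by simp [norm_smul, hx]
  rw [← ContinuousLinearMap.rayleigh_smul _ x (c := (‖x‖⁻¹ : ℂ)) (by simpa using hx),
    ContinuousLinearMap.rayleighQuotient, hu, one_pow, div_one, reApplyInnerSelf_toEuclideanCLM,
    abs_of_nonneg (Complex.nonneg_iff.mp (hM.dotProduct_mulVec_nonneg _)).1]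
  exact h _ (by rw [← EuclideanSpace.norm_sq_eq, hu, one_pow])

end Matrix

theorem isDensity_vecMulVec_star_self {ι : Type*} [Fintype ι] {a : ι → ℂ}
    (ha : ∑ i, ‖a i‖ ^ 2 = 1) : IsDensity (vecMulVec (star a) a) := by
  refine ⟨posSemidef_vecMulVec_star_self a, ?_⟩
  simp only [trace, diag_apply, vecMulVec_apply, Pi.star_apply, RCLike.star_def,
    Complex.conj_mul']
  exact_mod_cast ha

section Lam2

variable {ιA ιB : Type*} [Fintype ιA] [Fintype ιB]

theorem re_dotProduct_mulVec_le_lam2 (ω : Matrix (ιA × ιB) (ιA × ιB) ℂ) {a : ιA → ℂ}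
    {b : ιB → ℂ} (ha : ∑ i, ‖a i‖ ^ 2 = 1) (hb : ∑ k, ‖b k‖ ^ 2 = 1) :
    (star (fun p : ιA × ιB => a p.1 * b p.2) ⬝ᵥ ω *ᵥ fun p : ιA × ιB => a p.1 * b p.2).re ≤
      lam2 ω := by
  classical
  refine le_csSup ⟨‖ω‖, ?_⟩ ⟨a, b, ha, hb, rfl⟩
  rintro _ ⟨a, b, ha, hb, rfl⟩
  refine ω.re_dotProduct_mulVec_le_l2_opNorm ?_
  simp [Fintype.sum_prod_type, mul_pow, ← Finset.mul_sum, ha, hb]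

theorem lam2_nonneg {ω : Matrix (ιA × ιB) (ιA × ιB) ℂ} (hω : ω.PosSemidef) : 0 ≤ lam2 ω := by
  refine Real.sSup_nonneg ?_
  rintro _ ⟨a, b, -, -, rfl⟩
  exact (Complex.nonneg_iff.mp (hω.dotProduct_mulVec_nonneg _)).1

theorem lam2_le {ω : Matrix (ιA × ιB) (ιA × ιB) ℂ} {r : ℝ} (hr : 0 ≤ r)
    (h : ∀ (a : ιA → ℂ) (b : ιB → ℂ), ∑ i, ‖a i‖ ^ 2 = 1 → ∑ k, ‖b k‖ ^ 2 = 1 →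
      (star (fun p : ιA × ιB => a p.1 * b p.2) ⬝ᵥ ω *ᵥ fun p : ιA × ιB => a p.1 * b p.2).re ≤ r) :
    lam2 ω ≤ r := by
  refine Real.sSup_le ?_ hr
  rintro _ ⟨a, b, ha, hb, rfl⟩
  exact h a b ha hb

end Lam2

section Choi

variable {ιA ιB : Type*} [Fintype ιA] [DecidableEq ιA] [Fintype ιB]

omit [Fintype ιB] in
theorem map_apply_eq_sum_choi (Φ : Matrix ιA ιA ℂ →ₗ[ℂ] Matrix ιB ιB ℂ) (X : Matrix ιA ιA ℂ)
    (k l : ιB) : Φ X k l = ∑ i, ∑ j, X i j * choi Φ (i, k) (j, l) := by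
  have hX (i j : ιA) : single i j (X i j) = X i j • single i j (1 : ℂ) := by
    rw [smul_single, smul_eq_mul, mul_one]
  conv_lhs => rw [matrix_eq_sum_single X]
  simp only [map_sum, Matrix.sum_apply, hX, map_smul, Matrix.smul_apply, smul_eq_mul, choi,
    of_apply]

theorem dotProduct_choi_mulVec (Φ : Matrix ιA ιA ℂ →ₗ[ℂ] Matrix ιB ιB ℂ) (a : ιA → ℂ)
    (b : ιB → ℂ) :
    star (fun p : ιA × ιB => a p.1 * b p.2) ⬝ᵥ choi Φ *ᵥ (fun p : ιA × ιB => a p.1 * b p.2) =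
      star b ⬝ᵥ Φ (vecMulVec (star a) a) *ᵥ b := by
  simp only [dotProduct, mulVec, map_apply_eq_sum_choi Φ _ _ _, Fintype.sum_prod_type_right,
    vecMulVec_apply, Pi.star_apply, star_mul', Finset.mul_sum, Finset.sum_mul]
  refine Finset.sum_congr rfl fun k _ => Finset.sum_comm.trans ?_
  exact Finset.sum_congr rfl fun l _ => Finset.sum_congr rfl fun i _ =>
    Finset.sum_congr rfl fun j _ => by ring

theorem dotProduct_map_mulVec_eq_sum_eigenvalues (Φ : Matrix ιA ιA ℂ →ₗ[ℂ] Matrix ιB ιB ℂ)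
    {ρ : Matrix ιA ιA ℂ} (hρ : ρ.IsHermitian) (b : ιB → ℂ) :
    star b ⬝ᵥ Φ ρ *ᵥ b = ∑ k, (hρ.eigenvalues k : ℂ) *
      (star (fun p : ιA × ιB => star ⇑(hρ.eigenvectorBasis k) p.1 * b p.2) ⬝ᵥ
        choi Φ *ᵥ fun p : ιA × ιB => star ⇑(hρ.eigenvectorBasis k) p.1 * b p.2) := by
  conv_lhs => rw [hρ.eq_sum_eigenvalues_smul_vecMulVec]
  simp only [map_sum, map_smul, sum_mulVec, smul_mulVec, dotProduct_sum, dotProduct_smul,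
    smul_eq_mul]
  refine Finset.sum_congr rfl fun k _ => ?_
  rw [dotProduct_choi_mulVec, star_star]

theorem re_dotProduct_map_mulVec_le_lam2_choi (Φ : Matrix ιA ιA ℂ →ₗ[ℂ] Matrix ιB ιB ℂ)
    {ρ : Matrix ιA ιA ℂ} (hρ : IsDensity ρ) {b : ιB → ℂ} (hb : ∑ k, ‖b k‖ ^ 2 = 1) :
    (star b ⬝ᵥ Φ ρ *ᵥ b).re ≤ lam2 (choi Φ) := by
  obtain ⟨hpos, htr⟩ := hρ
  have hunit (k : ιA) : ∑ i, ‖star ⇑(hpos.isHermitian.eigenvectorBasis k) i‖ ^ 2 = 1 := by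
    simp only [Pi.star_apply, norm_star, ← EuclideanSpace.norm_sq_eq,
      hpos.isHermitian.eigenvectorBasis.orthonormal.1 k, one_pow]
  have hsum : ((∑ k, hpos.isHermitian.eigenvalues k : ℝ) : ℂ) = 1 := by
    rw [Complex.ofReal_sum, ← htr]
    exact hpos.isHermitian.trace_eq_sum_eigenvalues.symm
  rw [dotProduct_map_mulVec_eq_sum_eigenvalues Φ hpos.isHermitian, Complex.re_sum]
  calc _ ≤ ∑ k, hpos.isHermitian.eigenvalues k * lam2 (choi Φ) := Finset.sum_le_sum fun k _ => ?_
    _ = lam2 (choi Φ) := by rw [← Finset.sum_mul, Complex.ofReal_eq_one.mp hsum, one_mul]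
  rw [Complex.re_ofReal_mul]
  exact mul_le_mul_of_nonneg_left (re_dotProduct_mulVec_le_lam2 (choi Φ) (hunit k) hb)
    (hpos.eigenvalues_nonneg k)

variable [DecidableEq ιB]

theorem posSemidef_map_of_posSemidef_choi {Φ : Matrix ιA ιA ℂ →ₗ[ℂ] Matrix ιB ιB ℂ}
    (hΦ : (choi Φ).PosSemidef) {ρ : Matrix ιA ιA ℂ} (hρ : ρ.PosSemidef) : (Φ ρ).PosSemidef := by
  refine posSemidef_of_forall_dotProduct_mulVec_nonneg fun b => ?_
  rw [dotProduct_map_mulVec_eq_sum_eigenvalues Φ hρ.isHermitian]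
  exact Finset.sum_nonneg fun k _ =>
    mul_nonneg (by exact_mod_cast hρ.eigenvalues_nonneg k) (hΦ.dotProduct_mulVec_nonneg _)

theorem norm_map_le_lam2_choi {Φ : Matrix ιA ιA ℂ →ₗ[ℂ] Matrix ιB ιB ℂ}
    (hΦ : (choi Φ).PosSemidef) {ρ : Matrix ιA ιA ℂ} (hρ : IsDensity ρ) :
    ‖Φ ρ‖ ≤ lam2 (choi Φ) :=
  l2_opNorm_le_of_re_dotProduct_mulVec_le (posSemidef_map_of_posSemidef_choi hΦ hρ.1)
    (lam2_nonneg hΦ) fun _ hb => re_dotProduct_map_mulVec_le_lam2_choi Φ hρ hb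

end Choi

section NuInf

variable {ιA ιB : Type*} [Fintype ιA] [DecidableEq ιA] [Fintype ιB] [DecidableEq ιB]

theorem nuInf_nonneg (N : Channel ιA ιB) : 0 ≤ nuInf N := by
  refine Real.sSup_nonneg ?_
  rintro _ ⟨ρ, -, rfl⟩
  exact norm_nonneg _

theorem norm_map_le_nuInf (N : Channel ιA ιB) {ρ : Matrix ιA ιA ℂ} (hρ : IsDensity ρ) :
    ‖N.map ρ‖ ≤ nuInf N := by
  refine le_csSup ⟨lam2 (choi N.map), ?_⟩ ⟨ρ, hρ, rfl⟩
  rintro _ ⟨σ, hσ, rfl⟩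
  exact norm_map_le_lam2_choi N.cp hσ

theorem nuInf_le_lam2_choi (N : Channel ιA ιB) : nuInf N ≤ lam2 (choi N.map) := by
  refine Real.sSup_le ?_ (lam2_nonneg N.cp)
  rintro _ ⟨ρ, hρ, rfl⟩
  exact norm_map_le_lam2_choi N.cp hρ

end NuInf

theorem nuInf_eq_lam2_choi_general {ιA ιB : Type*} [Fintype ιA] [DecidableEq ιA]
    [Fintype ιB] [DecidableEq ιB]
    (N : Channel ιA ιB) :
    nuInf N = lam2 (choi N.map) := by
  refine le_antisymm (nuInf_le_lam2_choi N) (lam2_le (nuInf_nonneg N) fun a b ha hb => ?_)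
  rw [dotProduct_choi_mulVec]
  exact (re_dotProduct_mulVec_le_l2_opNorm _ hb).trans
    (norm_map_le_nuInf N (isDensity_vecMulVec_star_self ha))

/-- The maximum output purity of a channel equals the maximal overlap of its
Choi matrix with product unit vectors. -/
theorem nuInf_eq_lam2_choi {ιA ιB : Type*} [Fintype ιA] [DecidableEq ιA]
    [Fintype ιB] [DecidableEq ιB] [Nonempty ιA] [Nonempty ιB]
    (N : Channel ιA ιB) :
    nuInf N = lam2 (choi N.map) :=
  nuInf_eq_lam2_choi_general N
end

section
/- For a qubit channel N with Choi matrix J_N having 3×3 correlation matrix A with entries A_{ij} = (1/2)Tr[(σ_i ⊗ σ_j)J_N], the communication value is cv(N) = 1 + σ_max(A), where σ_max(A) is the largest singular value of A. -/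
open scoped BigOperators Kronecker ComplexOrder
open Matrix

/-- The Pauli matrices `σ_1 = X`, `σ_2 = Y`, `σ_3 = Z`. -/
def pauli : Fin 3 → Matrix (Fin 2) (Fin 2) ℂ :=
  ![!![0, 1; 1, 0], !![0, -Complex.I; Complex.I, 0], !![1, 0; 0, -1]]

/-- The 3×3 correlation matrix of the Choi matrix of a qubit channel:
`A_{ij} = (1/2) Tr[(σ_i ⊗ σ_j) J_N]`. -/
noncomputable def corrMatrix (N : Channel (Fin 2) (Fin 2)) : Matrix (Fin 3) (Fin 3) ℝ :=
  Matrix.of fun i j => (((pauli i ⊗ₖ pauli j) * choi N.map).trace).re / 2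

/-- The largest singular value of a real 3×3 matrix,
as the maximum of `uᵀ A v` over unit vectors. -/
noncomputable def sigmaMax (A : Matrix (Fin 3) (Fin 3) ℝ) : ℝ :=
  sSup {r | ∃ u v : Fin 3 → ℝ, (∑ i, u i ^ 2) = 1 ∧ (∑ i, v i ^ 2) = 1 ∧
    r = u ⬝ᵥ A *ᵥ v}


/-!
Write qubit operators in the Pauli basis, `a = α • 1 + ∑ i, x i • σ_i`. Such an `a` is positive
semidefinite iff `‖x‖ ≤ α` (trace `2α` and determinant `α² - ‖x‖²` nonnegative), and trace
preservation of `N` gives `Tr[(a ⊗ 1) J_N] = Tr a`. Hence for a product operator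
`Re Tr[(a ⊗ b) J_N] = 2αβ + α ⟨y, t⟩ + 2 ⟨x, A y⟩` with `t = choiMarginal N`.
For `Ω = ∑ a_i ⊗ b_i` the constraint `Tr_A Ω = 1` reads `∑ 2 α_i β_i = 1` and `∑ α_i y_i = 0`,
so the value is `1 + 2 ∑ ⟨x_i, A y_i⟩ ≤ 1 + σ_max(A) ∑ 2 α_i β_i = 1 + σ_max(A)`.
Equality holds for `Ω = P_u ⊗ P_v + P_{-u} ⊗ P_{-v}`, where `P_w = (1 + w · σ) / 2` is the pure
state with unit Bloch vector `w` and `u`, `v` are maximizing singular vectors of `A`.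
-/

section PartialTrace

variable {ιA ιB : Type*} [Fintype ιA]

lemma ptraceA_sum {ι : Type*} (s : Finset ι) (Ω : ι → Matrix (ιA × ιB) (ιA × ιB) ℂ) :
    ptraceA (∑ i ∈ s, Ω i) = ∑ i ∈ s, ptraceA (Ω i) := by
  ext k l
  simp only [ptraceA, of_apply, Matrix.sum_apply]
  exact Finset.sum_comm

lemma ptraceA_kronecker (a : Matrix ιA ιA ℂ) (b : Matrix ιB ιB ℂ) :
    ptraceA (a ⊗ₖ b) = a.trace • b := by
  ext k l
  simp [ptraceA, trace, Finset.sum_mul]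

end PartialTrace

lemma Channel.trace_kronecker_one_mul_choi {ιA ιB : Type*} [Fintype ιA] [DecidableEq ιA]
    [Fintype ιB] [DecidableEq ιB] (N : Channel ιA ιB) (m : Matrix ιA ιA ℂ) :
    ((m ⊗ₖ (1 : Matrix ιB ιB ℂ)) * choi N.map).trace = m.trace := by
  simp only [trace, diag, mul_apply, Fintype.sum_prod_type, choi, kroneckerMap_apply, one_apply,
    of_apply, mul_ite, mul_one, mul_zero, ite_mul, zero_mul, Finset.sum_ite_eq, Finset.mem_univ,
    if_true]
  refine Finset.sum_congr rfl fun i _ => ?_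
  calc ∑ k, ∑ j, m i j * N.map (single j i 1) k k
      = ∑ j, m i j * (N.map (single j i 1)).trace := by
        rw [Finset.sum_comm]
        simp [trace, Finset.mul_sum]
    _ = ∑ j, m i j * (single j i (1 : ℂ)).trace := by simp only [N.tp]
    _ = m i i := by
        rw [Finset.sum_eq_single i (fun j _ hj => by simp [hj]) (by simp)]
        simp

def blochMatrix (α : ℝ) (x : Fin 3 → ℝ) : Matrix (Fin 2) (Fin 2) ℂ :=
  (α : ℂ) • 1 + ∑ i, (x i : ℂ) • pauli i

lemma blochMatrix_eq_fin_two (α : ℝ) (x : Fin 3 → ℝ) :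
    blochMatrix α x =
      !![(α : ℂ) + x 2, x 0 - Complex.I * x 1; x 0 + Complex.I * x 1, α - x 2] := by
  ext i j
  fin_cases i <;> fin_cases j <;> simp [blochMatrix, pauli, Fin.sum_univ_three] <;> ring

lemma blochMatrix_one_zero : blochMatrix 1 0 = 1 := by
  simp [blochMatrix]

lemma trace_pauli (i : Fin 3) : (pauli i).trace = 0 := by
  fin_cases i <;> simp [pauli, trace_fin_two]

lemma trace_blochMatrix (α : ℝ) (x : Fin 3 → ℝ) :
    (blochMatrix α x).trace = ((2 * α : ℝ) : ℂ) := by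
  rw [blochMatrix_eq_fin_two, trace_fin_two_of]
  push_cast
  ring

lemma det_blochMatrix (α : ℝ) (x : Fin 3 → ℝ) :
    (blochMatrix α x).det = ((α ^ 2 - ∑ i, x i ^ 2 : ℝ) : ℂ) := by
  rw [blochMatrix_eq_fin_two, det_fin_two_of]
  push_cast [Fin.sum_univ_three]
  ring_nf
  rw [Complex.I_sq]
  ring

lemma smul_blochMatrix (c α : ℝ) (x : Fin 3 → ℝ) :
    (c : ℂ) • blochMatrix α x = blochMatrix (c * α) (c • x) := by
  simp only [blochMatrix, Pi.smul_apply, smul_eq_mul, smul_add, Finset.smul_sum, smul_smul]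
  push_cast
  rfl

lemma sum_blochMatrix {ι : Type*} (s : Finset ι) (α : ι → ℝ) (x : ι → Fin 3 → ℝ) :
    ∑ i ∈ s, blochMatrix (α i) (x i) = blochMatrix (∑ i ∈ s, α i) (∑ i ∈ s, x i) := by
  simp only [blochMatrix, Finset.sum_add_distrib, Finset.sum_apply]
  push_cast
  rw [Finset.sum_comm]
  simp only [Finset.sum_smul]

lemma blochMatrix_inj {α β : ℝ} {x y : Fin 3 → ℝ} :
    blochMatrix α x = blochMatrix β y ↔ α = β ∧ x = y := by
  refine ⟨fun h => ?_, fun ⟨hαβ, hxy⟩ => hαβ ▸ hxy ▸ rfl⟩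
  rw [blochMatrix_eq_fin_two, blochMatrix_eq_fin_two] at h
  have h00 := congrFun (congrFun h 0) 0
  have h01 := congrFun (congrFun h 0) 1
  have h10 := congrFun (congrFun h 1) 0
  have h11 := congrFun (congrFun h 1) 1
  simp [Complex.ext_iff] at h00 h01 h10 h11
  refine ⟨by linarith, funext fun i => ?_⟩
  fin_cases i <;> simp <;> linarith

lemma Matrix.IsHermitian.exists_eq_blochMatrix {a : Matrix (Fin 2) (Fin 2) ℂ}
    (ha : a.IsHermitian) : ∃ α x, a = blochMatrix α x := by
  have h00 := congrArg Complex.im (congrFun (congrFun ha.symm 0) 0)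
  have h11 := congrArg Complex.im (congrFun (congrFun ha.symm 1) 1)
  have h10 := Complex.ext_iff.mp (congrFun (congrFun ha.symm 1) 0)
  simp only [conjTranspose_apply, RCLike.star_def, Complex.conj_im, Complex.conj_re]
    at h00 h10 h11
  refine ⟨((a 0 0).re + (a 1 1).re) / 2,
    ![(a 0 1).re, -(a 0 1).im, ((a 0 0).re - (a 1 1).re) / 2], ?_⟩
  rw [blochMatrix_eq_fin_two]
  ext i j
  fin_cases i <;> fin_cases j <;> apply Complex.ext <;> simp <;> linarith

lemma isHermitian_blochMatrix (α : ℝ) (x : Fin 3 → ℝ) : (blochMatrix α x).IsHermitian := by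
  rw [blochMatrix_eq_fin_two]
  ext i j
  fin_cases i <;> fin_cases j <;> simp [Complex.ext_iff]

lemma blochMatrix_mul_self (α : ℝ) (x : Fin 3 → ℝ) :
    blochMatrix α x * blochMatrix α x = blochMatrix (α ^ 2 + ∑ i, x i ^ 2) ((2 * α) • x) := by
  simp only [blochMatrix_eq_fin_two]
  ext i j
  fin_cases i <;> fin_cases j <;>
    simp [Fin.sum_univ_three, Complex.ext_iff, mul_apply, pow_two] <;> constructor <;> ring

lemma sqrt_sum_sq_le_of_posSemidef_blochMatrix {α : ℝ} {x : Fin 3 → ℝ}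
    (h : (blochMatrix α x).PosSemidef) : √(∑ i, x i ^ 2) ≤ α := by
  have htr := h.trace_nonneg
  have hdet := h.det_nonneg
  rw [trace_blochMatrix, Complex.zero_le_real] at htr
  rw [det_blochMatrix, Complex.zero_le_real] at hdet
  exact Real.sqrt_le_iff.mpr ⟨by linarith, by linarith⟩

lemma posSemidef_blochMatrix_half {x : Fin 3 → ℝ} (hx : ∑ i, x i ^ 2 = 1 / 4) :
    (blochMatrix (1 / 2) x).PosSemidef := by
  have hP : blochMatrix (1 / 2) x = (blochMatrix (1 / 2) x)ᴴ * blochMatrix (1 / 2) x := by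
    rw [(isHermitian_blochMatrix _ _).eq, blochMatrix_mul_self, hx]
    norm_num
  rw [hP]
  exact posSemidef_conjTranspose_mul_self _

section SumSq

variable {ι : Type*} [Fintype ι]

lemma sq_le_sum_sq (u : ι → ℝ) (i : ι) : u i ^ 2 ≤ ∑ j, u j ^ 2 :=
  Finset.single_le_sum (fun j _ => sq_nonneg (u j)) (Finset.mem_univ i)

lemma eq_zero_of_sum_sq_eq_zero {u : ι → ℝ} (h : ∑ i, u i ^ 2 = 0) : u = 0 :=
  funext fun i => pow_eq_zero_iff two_ne_zero |>.mp <|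
    le_antisymm (h ▸ sq_le_sum_sq u i) (sq_nonneg _)

lemma sum_sq_inv_sqrt_smul {u : ι → ℝ} (h : ∑ i, u i ^ 2 ≠ 0) :
    ∑ i, ((√(∑ j, u j ^ 2))⁻¹ • u) i ^ 2 = 1 := by
  simp only [Pi.smul_apply, smul_eq_mul, mul_pow, ← Finset.mul_sum, inv_pow,
    Real.sq_sqrt (Finset.sum_nonneg fun j _ => sq_nonneg (u j))]
  exact inv_mul_cancel₀ h

variable (ι) in
lemma isCompact_setOf_sum_sq_eq_one : IsCompact {u : ι → ℝ | ∑ i, u i ^ 2 = 1} := by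
  refine Metric.isCompact_of_isClosed_isBounded
    (isClosed_eq (by fun_prop) continuous_const) (isBounded_iff_forall_norm_le.mpr ⟨1, ?_⟩)
  intro u hu
  refine (pi_norm_le_iff_of_nonneg zero_le_one).mpr fun i => ?_
  rw [Real.norm_eq_abs, ← sq_le_one_iff_abs_le_one]
  exact hu ▸ sq_le_sum_sq u i

end SumSq

section SigmaMax

variable (A : Matrix (Fin 3) (Fin 3) ℝ)

lemma isCompact_sigmaMax_set :
    IsCompact {r | ∃ u v : Fin 3 → ℝ, (∑ i, u i ^ 2) = 1 ∧ (∑ i, v i ^ 2) = 1 ∧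
      r = u ⬝ᵥ A *ᵥ v} := by
  convert ((isCompact_setOf_sum_sq_eq_one (Fin 3)).prod
    (isCompact_setOf_sum_sq_eq_one (Fin 3))).image
    (f := fun p : (Fin 3 → ℝ) × (Fin 3 → ℝ) => p.1 ⬝ᵥ A *ᵥ p.2) (by fun_prop) using 1
  ext r
  simp [eq_comm, and_assoc]

lemma le_sigmaMax {u v : Fin 3 → ℝ} (hu : ∑ i, u i ^ 2 = 1) (hv : ∑ i, v i ^ 2 = 1) :
    u ⬝ᵥ A *ᵥ v ≤ sigmaMax A :=
  le_csSup (isCompact_sigmaMax_set A).bddAbove ⟨u, v, hu, hv, rfl⟩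

lemma exists_eq_sigmaMax :
    ∃ u v : Fin 3 → ℝ, ∑ i, u i ^ 2 = 1 ∧ ∑ i, v i ^ 2 = 1 ∧ u ⬝ᵥ A *ᵥ v = sigmaMax A := by
  have he : ∑ i, (Pi.single 0 1 : Fin 3 → ℝ) i ^ 2 = 1 := by simp [Fin.sum_univ_three]
  obtain ⟨u, v, hu, hv, h⟩ := (isCompact_sigmaMax_set A).sSup_mem ⟨_, _, _, he, he, rfl⟩
  exact ⟨u, v, hu, hv, h.symm⟩

lemma sigmaMax_nonneg : 0 ≤ sigmaMax A := by
  obtain ⟨u, v, hu, hv, h⟩ := exists_eq_sigmaMax A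
  have := le_sigmaMax A (u := -u) (by simpa using hu) hv
  rw [neg_dotProduct, h] at this
  linarith

lemma dotProduct_mulVec_le_sigmaMax_mul (u v : Fin 3 → ℝ) :
    u ⬝ᵥ A *ᵥ v ≤ sigmaMax A * (√(∑ i, u i ^ 2) * √(∑ i, v i ^ 2)) := by
  by_cases hu : ∑ i, u i ^ 2 = 0
  · simp [eq_zero_of_sum_sq_eq_zero hu]
  by_cases hv : ∑ i, v i ^ 2 = 0
  · simp [eq_zero_of_sum_sq_eq_zero hv]
  have hs : 0 < √(∑ i, u i ^ 2) :=
    Real.sqrt_pos.mpr ((Finset.sum_nonneg fun i _ => sq_nonneg _).lt_of_ne' hu)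
  have ht : 0 < √(∑ i, v i ^ 2) :=
    Real.sqrt_pos.mpr ((Finset.sum_nonneg fun i _ => sq_nonneg _).lt_of_ne' hv)
  have h := le_sigmaMax A (sum_sq_inv_sqrt_smul hu) (sum_sq_inv_sqrt_smul hv)
  rw [smul_dotProduct, mulVec_smul, dotProduct_smul, smul_eq_mul, smul_eq_mul,
    inv_mul_le_iff₀ hs, inv_mul_le_iff₀ ht] at h
  linarith

lemma dotProduct_mulVec_le_of_posSemidef_blochMatrix {α β : ℝ} {x y : Fin 3 → ℝ}
    (ha : (blochMatrix α x).PosSemidef) (hb : (blochMatrix β y).PosSemidef) :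
    x ⬝ᵥ A *ᵥ y ≤ sigmaMax A * (α * β) :=
  (dotProduct_mulVec_le_sigmaMax_mul A x y).trans <| mul_le_mul_of_nonneg_left
    (mul_le_mul (sqrt_sum_sq_le_of_posSemidef_blochMatrix ha)
      (sqrt_sum_sq_le_of_posSemidef_blochMatrix hb) (Real.sqrt_nonneg _)
      ((Real.sqrt_nonneg _).trans (sqrt_sum_sq_le_of_posSemidef_blochMatrix ha)))
    (sigmaMax_nonneg A)

end SigmaMax

def choiMarginal (N : Channel (Fin 2) (Fin 2)) (j : Fin 3) : ℝ :=
  (((1 ⊗ₖ pauli j) * choi N.map).trace).re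

lemma re_trace_kronecker_blochMatrix_mul_choi (N : Channel (Fin 2) (Fin 2)) (α β : ℝ)
    (x y : Fin 3 → ℝ) :
    (((blochMatrix α x ⊗ₖ blochMatrix β y) * choi N.map).trace).re
      = 2 * α * β + α * (y ⬝ᵥ choiMarginal N) + 2 * (x ⬝ᵥ corrMatrix N *ᵥ y) := by
  have h11 : ((1 ⊗ₖ 1) * choi N.map).trace = 2 := by
    rw [N.trace_kronecker_one_mul_choi, trace_one]
    simp
  have hσ1 (i : Fin 3) : ((pauli i ⊗ₖ 1) * choi N.map).trace = 0 := by
    rw [N.trace_kronecker_one_mul_choi, trace_pauli]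
  have hσσ (i j : Fin 3) :
      (((pauli i ⊗ₖ pauli j) * choi N.map).trace).re = 2 * corrMatrix N i j := by
    rw [corrMatrix, of_apply]
    ring
  simp only [blochMatrix, Fin.sum_univ_three, add_kronecker, kronecker_add, smul_kronecker,
    kronecker_smul, add_mul, smul_mul_assoc, trace_add, trace_smul, smul_eq_mul, Complex.add_re,
    Complex.re_ofReal_mul, h11, hσ1, hσσ, Complex.re_ofNat, mul_zero, add_zero,
    dotProduct, choiMarginal, mulVec]
  ring

lemma re_trace_mul_choi_le_of_ptraceA_eq_one (N : Channel (Fin 2) (Fin 2)) {n : ℕ}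
    {α β : Fin n → ℝ} {x y : Fin n → Fin 3 → ℝ}
    (ha : ∀ i, (blochMatrix (α i) (x i)).PosSemidef)
    (hb : ∀ i, (blochMatrix (β i) (y i)).PosSemidef)
    (hΩ : ptraceA (∑ i, blochMatrix (α i) (x i) ⊗ₖ blochMatrix (β i) (y i)) = 1) :
    (((∑ i, blochMatrix (α i) (x i) ⊗ₖ blochMatrix (β i) (y i)) * choi N.map).trace).re ≤
      1 + sigmaMax (corrMatrix N) := by
  obtain ⟨hαβ, hαy⟩ : ∑ i, 2 * α i * β i = 1 ∧ ∑ i, (2 * α i) • y i = 0 := by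
    simp only [ptraceA_sum, ptraceA_kronecker, trace_blochMatrix, smul_blochMatrix,
      sum_blochMatrix, ← blochMatrix_one_zero, blochMatrix_inj] at hΩ
    exact hΩ
  have hmarg : ∑ i, α i * (y i ⬝ᵥ choiMarginal N) = 0 := by
    have := congrArg (· ⬝ᵥ choiMarginal N) hαy
    simp only [sum_dotProduct, smul_dotProduct, smul_eq_mul, zero_dotProduct, mul_assoc,
      ← Finset.mul_sum] at this
    linarith
  have hcorr i :
      2 * (x i ⬝ᵥ corrMatrix N *ᵥ y i) ≤ sigmaMax (corrMatrix N) * (2 * α i * β i) := by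
    have := dotProduct_mulVec_le_of_posSemidef_blochMatrix (corrMatrix N) (ha i) (hb i)
    linarith
  calc (((∑ i, blochMatrix (α i) (x i) ⊗ₖ blochMatrix (β i) (y i)) * choi N.map).trace).re
      = ∑ i, 2 * α i * β i + ∑ i, α i * (y i ⬝ᵥ choiMarginal N)
          + ∑ i, 2 * (x i ⬝ᵥ corrMatrix N *ᵥ y i) := by
        simp only [Finset.sum_mul, trace_sum, Complex.re_sum,
          re_trace_kronecker_blochMatrix_mul_choi, Finset.sum_add_distrib]
    _ ≤ 1 + 0 + ∑ i, sigmaMax (corrMatrix N) * (2 * α i * β i) := by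
        have := Finset.sum_le_sum fun i (_ : i ∈ Finset.univ) => hcorr i
        linarith
    _ = 1 + sigmaMax (corrMatrix N) := by rw [← Finset.mul_sum, hαβ, mul_one, add_zero]

lemma exists_isSep_ptraceA_eq_one_re_trace_mul_choi_eq (N : Channel (Fin 2) (Fin 2)) :
    ∃ Ω, IsSep Ω ∧ ptraceA Ω = 1 ∧
      1 + sigmaMax (corrMatrix N) = ((Ω * choi N.map).trace).re := by
  obtain ⟨u, v, hu, hv, huv⟩ := exists_eq_sigmaMax (corrMatrix N)
  have hstate {w : Fin 3 → ℝ} (hw : ∑ i, w i ^ 2 = 1) (c : ℝ) (hc : c ^ 2 = 1 / 4) :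
      (blochMatrix (1 / 2) (c • w)).PosSemidef :=
    posSemidef_blochMatrix_half (by simp [mul_pow, ← Finset.mul_sum, hw, hc])
  let s : Fin 2 → ℝ := ![1 / 2, -1 / 2]
  have hs i : s i ^ 2 = 1 / 4 := by fin_cases i <;> norm_num [s]
  refine ⟨∑ i, blochMatrix (1 / 2) (s i • u) ⊗ₖ blochMatrix (1 / 2) (s i • v),
    ⟨2, _, _, fun i => hstate hu _ (hs i), fun i => hstate hv _ (hs i), rfl⟩, ?_, ?_⟩
  · simp only [ptraceA_sum, ptraceA_kronecker, trace_blochMatrix, smul_blochMatrix,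
      sum_blochMatrix, ← blochMatrix_one_zero, blochMatrix_inj]
    constructor <;> norm_num [s]
  · rw [← huv, Finset.sum_mul, trace_sum, Complex.re_sum, Fin.sum_univ_two]
    simp only [re_trace_kronecker_blochMatrix_mul_choi, smul_dotProduct, mulVec_smul,
      dotProduct_smul, smul_eq_mul]
    norm_num [s]
    ring

/-- The communication value of a qubit channel is `1 + σ_max(A)` where `A` is
the correlation matrix of its Choi matrix. -/
theorem cv_qubit (N : Channel (Fin 2) (Fin 2)) :
    cv N = 1 + sigmaMax (corrMatrix N) := by
  refine IsGreatest.csSup_eq ⟨exists_isSep_ptraceA_eq_one_re_trace_mul_choi_eq N, ?_⟩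
  rintro r ⟨Ω, ⟨n, a, b, ha, hb, rfl⟩, hΩ, rfl⟩
  choose α x hax using fun i => (ha i).isHermitian.exists_eq_blochMatrix
  choose β y hby using fun i => (hb i).isHermitian.exists_eq_blochMatrix
  obtain rfl : a = fun i => blochMatrix (α i) (x i) := funext hax
  obtain rfl : b = fun i => blochMatrix (β i) (y i) := funext hby
  exact re_trace_mul_choi_le_of_ptraceA_eq_one N ha hb hΩ
end
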